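/- arXiv:2001.00274 — 7 statements merged into one kernel-verified Lean document; each statement's English description precedes it below -/
import Mathlib

section
/- Let G be a simple undirected graph on a vertex set W and let S ⊆ W be a bipartition class, i.e., every edge of G has exactly one endpoint in S. Let Ω(G) be the set of bijections π : W → W such that π(x) is adjacent to x in G for every x ∈ W. Then the map sending π to the pair (M₁, M₂), where M₁ = {{v, π(v)} : v ∈ S} and M₂ = {{u, π(u)} : u ∈ W \ S}, is a bijection from Ω(G) onto the set of pairs of perfect matchings of G. -/
/-!
Every vertex lies on exactly one edge `{v, π v}` with `v ∈ S`: a vertex of `S` on its own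
edge, a vertex outside `S` on the edge of its preimage, which lies in `S` since `π` follows
edges of the bipartite graph `G`. So both halves of a restricted permutation are perfect
matchings, and `π` is recovered from them, because on `S` it maps `v` to its partner in `M₁`
and off `S` to its partner in `M₂`. Conversely, gluing the two partner maps along `S` gives a
restricted permutation: its inverse glues them the other way round, since each partner map
is an involution exchanging `S` and its complement.
-/

/-- A perfect matching of a simple undirected graph: a set of edges of the graph
such that every vertex belongs to exactly one edge of the set. -/
def IsPerfectMatching {W : Type*} (G : SimpleGraph W) (M : Set (Sym2 W)) : Prop :=
  M ⊆ G.edgeSet ∧ ∀ v : W, ∃! e, e ∈ M ∧ v ∈ e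

section

variable {W : Type*} {G : SimpleGraph W}

theorem SimpleGraph.isBipartiteWith_compl_iff {S : Set W} :
    G.IsBipartiteWith S Sᶜ ↔ ∀ v u : W, G.Adj v u → (v ∈ S ↔ u ∉ S) := by
  refine ⟨fun hG v u hvu => ⟨fun hv => hG.mem_of_mem_adj hv hvu,
    fun hu => hG.mem_of_mem_adj' hu hvu⟩, fun hS => ⟨disjoint_compl_right, fun v u hvu => ?_⟩⟩
  by_cases hv : v ∈ S
  · exact Or.inl ⟨hv, (hS v u hvu).mp hv⟩
  · exact Or.inr ⟨hv, not_not.mp (mt (hS v u hvu).mpr hv)⟩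

namespace IsPerfectMatching

variable {M : Set (Sym2 W)} (hM : IsPerfectMatching G M)

noncomputable def partner (v : W) : W :=
  Sym2.Mem.other (hM.2 v).exists.choose_spec.2

theorem mk_partner_mem (v : W) : s(v, hM.partner v) ∈ M := by
  have hv := (hM.2 v).exists.choose_spec
  rw [partner, Sym2.other_spec hv.2]
  exact hv.1

theorem partner_eq_of_mem {v w : W} (hvw : s(v, w) ∈ M) : hM.partner v = w :=
  Sym2.congr_right.mp <|
    (hM.2 v).unique ⟨hM.mk_partner_mem v, Sym2.mem_mk_left _ _⟩ ⟨hvw, Sym2.mem_mk_left _ _⟩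

theorem adj_partner (v : W) : G.Adj v (hM.partner v) :=
  hM.1 (hM.mk_partner_mem v)

theorem partner_involutive : Function.Involutive hM.partner := fun v =>
  hM.partner_eq_of_mem (Sym2.eq_swap ▸ hM.mk_partner_mem v)

end IsPerfectMatching

def edgesFrom (S : Set W) (π : W → W) : Set (Sym2 W) :=
  {e | ∃ v ∈ S, e = s(v, π v)}

section edgesFrom

variable {S : Set W} {π σ : W → W}

theorem edgesFrom_congr (h : Set.EqOn π σ S) : edgesFrom S π = edgesFrom S σ := by
  ext e
  exact exists_congr fun v => and_congr_right fun hv => by rw [h hv]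

theorem mk_mem_edgesFrom_iff (hG : G.IsBipartiteWith S Sᶜ) (hπ : ∀ x, G.Adj x (π x))
    {x y : W} (hx : x ∈ S) : s(x, y) ∈ edgesFrom S π ↔ π x = y := by
  refine ⟨?_, fun h => ⟨x, hx, h ▸ rfl⟩⟩
  rintro ⟨v, hv, hxy⟩
  rcases Sym2.eq_iff.mp hxy with ⟨rfl, rfl⟩ | ⟨rfl, -⟩
  · rfl
  · exact absurd hx (hG.mem_of_mem_adj hv (hπ v))

theorem eqOn_of_edgesFrom_eq (hG : G.IsBipartiteWith S Sᶜ) (hσ : ∀ x, G.Adj x (σ x))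
    (h : edgesFrom S π = edgesFrom S σ) : Set.EqOn π σ S := fun x hx =>
  ((mk_mem_edgesFrom_iff hG hσ hx).mp (h ▸ ⟨x, hx, rfl⟩)).symm

theorem isPerfectMatching_edgesFrom (hG : G.IsBipartiteWith S Sᶜ) (hb : Function.Bijective π)
    (hπ : ∀ x, G.Adj x (π x)) : IsPerfectMatching G (edgesFrom S π) := by
  refine ⟨by rintro e ⟨v, -, rfl⟩; exact hπ v, fun x => ?_⟩
  by_cases hx : x ∈ S
  · refine ⟨s(x, π x), ⟨⟨x, hx, rfl⟩, Sym2.mem_mk_left _ _⟩, ?_⟩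
    rintro e ⟨⟨v, hv, rfl⟩, hxe⟩
    rcases Sym2.mem_iff.mp hxe with rfl | rfl
    · rfl
    · exact absurd hx (hG.mem_of_mem_adj hv (hπ v))
  · obtain ⟨v, rfl⟩ := hb.2 x
    have hv : v ∈ S := hG.mem_of_mem_adj' hx (hπ v)
    refine ⟨s(v, π v), ⟨⟨v, hv, rfl⟩, Sym2.mem_mk_right _ _⟩, ?_⟩
    rintro e ⟨⟨u, hu, rfl⟩, hxe⟩
    rcases Sym2.mem_iff.mp hxe with h | h
    · exact absurd (h ▸ hu) hx
    · rw [hb.1 h]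

theorem edgesFrom_partner (hG : G.IsBipartiteWith S Sᶜ) {M : Set (Sym2 W)}
    (hM : IsPerfectMatching G M) : edgesFrom S hM.partner = M := by
  ext e
  induction e using Sym2.ind with
  | _ a b =>
    refine ⟨fun ⟨v, _, he⟩ => he ▸ hM.mk_partner_mem v, fun hab => ?_⟩
    by_cases ha : a ∈ S
    · exact ⟨a, ha, by rw [hM.partner_eq_of_mem hab]⟩
    · refine ⟨b, hG.mem_of_mem_adj' ha (hM.1 hab).symm, ?_⟩
      rw [hM.partner_eq_of_mem (Sym2.eq_swap ▸ hab), Sym2.eq_swap]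

end edgesFrom

section piecewise

variable {S : Set W} [DecidablePred (· ∈ S)] {M₁ M₂ : Set (Sym2 W)}
  (hM₁ : IsPerfectMatching G M₁) (hM₂ : IsPerfectMatching G M₂)

theorem adj_piecewise_partner (x : W) : G.Adj x (S.piecewise hM₁.partner hM₂.partner x) := by
  unfold Set.piecewise
  split_ifs
  exacts [hM₁.adj_partner x, hM₂.adj_partner x]

theorem leftInverse_piecewise_partner (hG : G.IsBipartiteWith S Sᶜ) :
    Function.LeftInverse (S.piecewise hM₂.partner hM₁.partner)
      (S.piecewise hM₁.partner hM₂.partner) := by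
  intro x
  by_cases hx : x ∈ S
  · have : hM₁.partner x ∉ S := hG.mem_of_mem_adj hx (hM₁.adj_partner x)
    rw [Set.piecewise_eq_of_mem _ _ _ hx, Set.piecewise_eq_of_notMem _ _ _ this,
      hM₁.partner_involutive x]
  · have : hM₂.partner x ∈ S := hG.mem_of_mem_adj' hx (hM₂.adj_partner x).symm
    rw [Set.piecewise_eq_of_notMem _ _ _ hx, Set.piecewise_eq_of_mem _ _ _ this,
      hM₂.partner_involutive x]

theorem bijective_piecewise_partner (hG : G.IsBipartiteWith S Sᶜ) :
    Function.Bijective (S.piecewise hM₁.partner hM₂.partner) :=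
  Function.bijective_iff_has_inverse.mpr
    ⟨_, leftInverse_piecewise_partner hM₁ hM₂ hG, leftInverse_piecewise_partner hM₂ hM₁ hG⟩

end piecewise

end

/-- for a simple graph `G` with bipartition class `S`, the map
`π ↦ (M₁, M₂)`, with `M₁ = {{v, π v} : v ∈ S}` and `M₂ = {{u, π u} : u ∉ S}`,
is a bijection from the set of `G`-restricted permutations onto the set of pairs
of perfect matchings of `G`. -/
theorem bipartite_restricted_permutations_equiv_pairs_of_matchings
    {W : Type*} (G : SimpleGraph W) (S : Set W)
    (hS : ∀ v u : W, G.Adj v u → (v ∈ S ↔ u ∉ S)) :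
    Set.BijOn
      (fun π : W → W =>
        (({e | ∃ v ∈ S, e = s(v, π v)} : Set (Sym2 W)),
         ({e | ∃ u ∈ Sᶜ, e = s(u, π u)} : Set (Sym2 W))))
      {π : W → W | Function.Bijective π ∧ ∀ x : W, G.Adj x (π x)}
      {p : Set (Sym2 W) × Set (Sym2 W) |
        IsPerfectMatching G p.1 ∧ IsPerfectMatching G p.2} := by
  classical
  have hG : G.IsBipartiteWith S Sᶜ := SimpleGraph.isBipartiteWith_compl_iff.mpr hS
  have hGc : G.IsBipartiteWith Sᶜ Sᶜᶜ := by
    rw [compl_compl]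
    exact hG.symm
  refine ⟨fun π ⟨hb, hπ⟩ => ⟨isPerfectMatching_edgesFrom hG hb hπ,
    isPerfectMatching_edgesFrom hGc hb hπ⟩, ?_, ?_⟩
  · rintro π - σ ⟨-, hσ⟩ h
    funext x
    by_cases hx : x ∈ S
    · exact eqOn_of_edgesFrom_eq hG hσ (Prod.ext_iff.mp h).1 hx
    · exact eqOn_of_edgesFrom_eq hGc hσ (Prod.ext_iff.mp h).2 hx
  · rintro ⟨M₁, M₂⟩ ⟨hM₁, hM₂⟩
    refine ⟨S.piecewise hM₁.partner hM₂.partner,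
      ⟨bijective_piecewise_partner hM₁ hM₂ hG, adj_piecewise_partner hM₁ hM₂⟩, ?_⟩
    exact Prod.ext ((edgesFrom_congr (S.piecewise_eqOn _ _)).trans (edgesFrom_partner hG hM₁))
      ((edgesFrom_congr (S.piecewise_eqOn_compl _ _)).trans (edgesFrom_partner hGc hM₂))
end

section
/- Let W be a set, S ⊆ W, and E ⊆ W × W a directed graph such that every edge (x, y) ∈ E has exactly one of its two endpoints in S (i.e., the directed graph is bipartite with parts S and W \ S). Let G̃ be the simple undirected graph on W in which x is adjacent to y if and only if (x, y) ∈ E or (y, x) ∈ E. Then for every bijection π : W → W with (x, π(x)) ∈ E for all x ∈ W, the edge sets M¹_π = {{v, π(v)} : v ∈ S} and M²_π = {{u, π(u)} : u ∈ W \ S} are perfect matchings of G̃, and the map π ↦ (M¹_π, M²_π) is injective on the set of all such bijections π. -/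
/-! A permutation `π` exchanging a set `T` with its complement pairs every vertex of `T`
with exactly one vertex of `Tᶜ`, so the edges `{v, π v}` with `v ∈ T` cover every vertex
exactly once; and since `π v ∉ T`, the edge `{v, π v}` determines `π v` as its endpoint
outside `T`. Bipartiteness of `E` makes every restricted permutation exchange `S` and `Sᶜ`. -/

section PairEdges

variable {W : Type*}

def pairEdges (π : W → W) (T : Set W) : Set (Sym2 W) := {e | ∃ v ∈ T, e = s(v, π v)}

theorem existsUnique_mem_pairEdges {π : W → W} (hπ : Function.Bijective π) {T : Set W}
    (hT : ∀ x, x ∈ T ↔ π x ∉ T) (w : W) : ∃! e, e ∈ pairEdges π T ∧ w ∈ e := by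
  by_cases hw : w ∈ T
  · refine ⟨s(w, π w), ⟨⟨w, hw, rfl⟩, Sym2.mem_mk_left _ _⟩, ?_⟩
    rintro _ ⟨⟨v, hv, rfl⟩, hwv⟩
    rcases Sym2.mem_iff.mp hwv with rfl | rfl
    · rfl
    · exact absurd hw ((hT v).mp hv)
  · obtain ⟨v, rfl⟩ := hπ.surjective w
    refine ⟨s(v, π v), ⟨⟨v, (hT v).mpr hw, rfl⟩, Sym2.mem_mk_right _ _⟩, ?_⟩
    rintro _ ⟨⟨v', hv', rfl⟩, hwv'⟩
    rcases Sym2.mem_iff.mp hwv' with rfl | h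
    · exact absurd hv' hw
    · rw [hπ.injective h]

theorem isPerfectMatching_pairEdges (G : SimpleGraph W) {π : W → W}
    (hπ : Function.Bijective π) (hadj : ∀ x, G.Adj x (π x)) {T : Set W}
    (hT : ∀ x, x ∈ T ↔ π x ∉ T) : IsPerfectMatching G (pairEdges π T) :=
  ⟨fun _ ⟨v, _, he⟩ => he ▸ hadj v, existsUnique_mem_pairEdges hπ hT⟩

theorem apply_eq_of_pairEdges_eq {π σ : W → W} {T : Set W} (hσ : ∀ x ∈ T, σ x ∉ T)
    (h : pairEdges π T = pairEdges σ T) {x : W} (hx : x ∈ T) : π x = σ x := by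
  obtain ⟨v, hv, he⟩ : s(x, π x) ∈ pairEdges σ T := h ▸ ⟨x, hx, rfl⟩
  rcases Sym2.eq_iff.mp he with ⟨rfl, h⟩ | ⟨hxv, -⟩
  · exact h
  · exact absurd (hxv ▸ hx) (hσ v hv)

end PairEdges

/-- for a directed bipartite graph `E` on `W` with parts `S` and `Sᶜ`
and its undirected version `G`, every `E`-restricted permutation `π` yields a pair of
perfect matchings `M¹_π = {{v, π v} : v ∈ S}` and `M²_π = {{u, π u} : u ∉ S}` of `G`,
and `π ↦ (M¹_π, M²_π)` is injective on the set of `E`-restricted permutations. -/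
theorem bipartite_directed_restricted_permutations_embed_in_matching_pairs
    {W : Type*} (S : Set W) (E : Set (W × W))
    (hE : ∀ p ∈ E, (p.1 ∈ S ↔ p.2 ∉ S))
    (G : SimpleGraph W)
    (hG : ∀ x y : W, G.Adj x y ↔ ((x, y) ∈ E ∨ (y, x) ∈ E)) :
    (∀ π : W → W, Function.Bijective π → (∀ x : W, (x, π x) ∈ E) →
      IsPerfectMatching G ({e | ∃ v ∈ S, e = s(v, π v)} : Set (Sym2 W)) ∧
      IsPerfectMatching G ({e | ∃ u ∈ Sᶜ, e = s(u, π u)} : Set (Sym2 W))) ∧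
    Set.InjOn
      (fun π : W → W =>
        (({e | ∃ v ∈ S, e = s(v, π v)} : Set (Sym2 W)),
         ({e | ∃ u ∈ Sᶜ, e = s(u, π u)} : Set (Sym2 W))))
      {π : W → W | Function.Bijective π ∧ ∀ x : W, (x, π x) ∈ E} := by
  have swaps_S {π : W → W} (hπ : ∀ x, (x, π x) ∈ E) (x : W) : x ∈ S ↔ π x ∉ S :=
    hE _ (hπ x)
  have swaps_compl {π : W → W} (hπ : ∀ x, (x, π x) ∈ E) (x : W) : x ∈ Sᶜ ↔ π x ∉ Sᶜ := by
    simpa only [Set.mem_compl_iff, not_not, not_iff_comm] using (swaps_S hπ x).symm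
  refine ⟨fun π hbij hπ => ?_, fun π ⟨_, hπ⟩ σ ⟨_, hσ⟩ heq => ?_⟩
  · have hadj (x : W) : G.Adj x (π x) := (hG _ _).mpr (Or.inl (hπ x))
    exact ⟨isPerfectMatching_pairEdges G hbij hadj (swaps_S hπ),
      isPerfectMatching_pairEdges G hbij hadj (swaps_compl hπ)⟩
  · obtain ⟨hS, hSc⟩ := Prod.ext_iff.mp heq
    funext x
    by_cases hx : x ∈ S
    · exact apply_eq_of_pairEdges_eq (fun y hy => (swaps_S hσ y).mp hy) hS hx
    · exact apply_eq_of_pairEdges_eq (fun y hy => (swaps_compl hσ y).mp hy) hSc hx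
end

section
/- Let d ≥ 1, let A ⊆ ℤ^d be a finite set, and let M : ℤ^d → ℤ^d be an injective additive group endomorphism (equivalently, given by an integer d×d matrix with nonzero determinant). Let k be the (finite) index of the subgroup M(ℤ^d) in ℤ^d. Then there exists a bijection Φ : Ω(M(A)) → Ω(A)^k such that for every π ∈ Ω(M(A)), every m ∈ ℤ^d, and every index i ∈ {1,…,k}, Φ(τ_{Mm} ∘ π ∘ τ_{Mm}⁻¹)_i = τ_m ∘ Φ(π)_i ∘ τ_m⁻¹, where τ_v denotes the translation x ↦ x + v of ℤ^d and M(A) is the image of A under M. In particular h(Ω(A)) = h(Ω(M(A))). -/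
open Filter

/-- `ℤ^d`. -/
abbrev Zd (d : ℕ) := Fin d → ℤ

/-- `Ω(A)`: bijections `π : ℤ^d → ℤ^d` with `π x − x ∈ A` for all `x`. -/
def Omega (d : ℕ) (A : Set (Zd d)) : Set (Zd d → Zd d) :=
  {π | Function.Bijective π ∧ ∀ x : Zd d, π x - x ∈ A}

/-- The box `{0,…,n−1}^d ⊆ ℤ^d`. -/
def box (d n : ℕ) : Set (Zd d) := {x | ∀ i : Fin d, 0 ≤ x i ∧ x i < (n : ℤ)}

/-- `B_{(n,…,n)}(Ω(A))`: restrictions of elements of `Ω(A)` to the box. -/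
def patterns (d : ℕ) (A : Set (Zd d)) (n : ℕ) : Set (↥(box d n) → Zd d) :=
  {p | ∃ π ∈ Omega d A, ∀ x : ↥(box d n), p x = π x.val}

/-- The topological entropy `h(Ω(A)) = limsup_n log|B_{(n,…,n)}(Ω(A))| / n^d`. -/
noncomputable def entropy (d : ℕ) (A : Set (Zd d)) : ℝ :=
  limsup (fun n : ℕ => Real.log ((patterns d A n).ncard : ℝ) / (n : ℝ) ^ d) atTop

/-!
Fix representatives `c i` of the cosets of `M(ℤ^d)`. Every `π ∈ Ω(M(A))` moves points by elements of
`M(ℤ^d)`, so it preserves each coset `c i + M(ℤ^d)`, and transporting it along `y ↦ M y + c i` gives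
`π_i ∈ Ω(A)`; gluing the `π_i` back inverts this, and conjugating `π` by `τ_{Mm}` conjugates every `π_i`
by `τ_m`.

For the entropy, the window `W = ⋃ i, (c i + M(box m))` carries exactly `|B_m(Ω(A))|^k` patterns of
`Ω(M(A))`, and the translates of `W` by `M(mℤ^d)` tile `ℤ^d`. Covering large boxes by such tiles gives
`h(Ω(M(A))) ≤ log |B_m(Ω(A))| / m^d` for every `m`, hence `h(Ω(M(A))) ≤ h(Ω(A))`. For `M = q • id` the
windows are the boxes of side `qm`, so the count is exact and `h(Ω(A)) ≤ h(Ω(qA))`. Finally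
`N(x) = M⁻¹(k x)` satisfies `N ∘ M = k • id`, so
`h(Ω(A)) ≤ h(Ω(kA)) = h(Ω(N(M(A)))) ≤ h(Ω(M(A)))`.
-/

open Function Set
open scoped Pointwise

noncomputable section

section Patterns

variable {d : ℕ}

lemma box_eq_coe_piFinset (n : ℕ) :
    box d n = ↑(Fintype.piFinset fun _ : Fin d => Finset.Ico (0 : ℤ) n) := by
  ext x
  simp [box]

lemma finite_box (n : ℕ) : (box d n).Finite := by
  rw [box_eq_coe_piFinset]
  exact Finset.finite_toSet _

instance (n : ℕ) : Finite (box d n) := (finite_box n).to_subtype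

lemma ncard_box (n : ℕ) : (box d n).ncard = n ^ d := by
  rw [box_eq_coe_piFinset, ncard_coe_finset, Fintype.card_piFinset]
  simp

lemma mem_vadd_box {v x : Zd d} {n : ℕ} : x ∈ v +ᵥ box d n ↔ ∀ j, v j ≤ x j ∧ x j < v j + n := by
  rw [mem_vadd_set_iff_neg_vadd_mem]
  refine forall_congr' fun j => ?_
  simp only [vadd_eq_add, Pi.add_apply, Pi.neg_apply]
  omega

lemma ncard_univ_pi {ι : Type*} {α : ι → Type*} [Fintype ι] (t : ∀ i, Set (α i)) :
    (univ.pi t).ncard = ∏ i, (t i).ncard := by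
  simp only [← Nat.card_coe_set_eq, Nat.card_congr (Equiv.Set.univPi t), Nat.card_pi]

lemma log_natCast_le_log_natCast {a b : ℕ} (h : a ≤ b) : Real.log a ≤ Real.log b := by
  rcases a.eq_zero_or_pos with rfl | ha
  · simpa using Real.log_natCast_nonneg b
  · exact Real.log_le_log (by exact_mod_cast ha) (by exact_mod_cast h)

lemma conj_vadd_mem_omega {A : Set (Zd d)} {π : Zd d → Zd d} (hπ : π ∈ Omega d A) (v : Zd d) :
    (fun x => π (-v + x) + v) ∈ Omega d A := by
  refine ⟨(Equiv.addRight v).bijective.comp (hπ.1.comp (Equiv.addLeft (-v)).bijective), fun x => ?_⟩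
  convert hπ.2 (-v + x) using 1
  dsimp only
  abel

def patternsOn (A W : Set (Zd d)) : Set (W → Zd d) := W.domRestrict '' Omega d A

def patternCount (A W : Set (Zd d)) : ℕ := (patternsOn A W).ncard

variable {A : Set (Zd d)}

lemma patterns_eq_patternsOn (A : Set (Zd d)) (n : ℕ) : patterns d A n = patternsOn A (box d n) := by
  ext p
  constructor
  · rintro ⟨π, hπ, h⟩
    exact ⟨π, hπ, funext fun x => (h x).symm⟩
  · rintro ⟨π, hπ, rfl⟩
    exact ⟨π, hπ, fun _ => rfl⟩

lemma patternsOn_subset_image_pi (A W : Set (Zd d)) :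
    patternsOn A W ⊆ (fun (a : W → Zd d) x => x + a x) '' univ.pi fun _ => A := by
  rintro _ ⟨π, hπ, rfl⟩
  exact ⟨fun x => π x - x, fun x _ => hπ.2 x, funext fun x => add_sub_cancel _ _⟩

lemma patternsOn_finite (hA : A.Finite) {W : Set (Zd d)} (hW : W.Finite) :
    (patternsOn A W).Finite :=
  have := hW.to_subtype
  ((Finite.pi fun _ => hA).image _).subset (patternsOn_subset_image_pi A W)

lemma patternCount_le_pow (hA : A.Finite) {W : Set (Zd d)} (hW : W.Finite) :
    patternCount A W ≤ A.ncard ^ W.ncard := by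
  have := hW.to_subtype
  have hpi : (univ.pi fun _ : W => A).Finite := Finite.pi fun _ => hA
  calc patternCount A W ≤ (_ '' univ.pi fun _ : W => A).ncard :=
        ncard_le_ncard (patternsOn_subset_image_pi A W) (hpi.image _)
    _ ≤ (univ.pi fun _ : W => A).ncard := ncard_image_le hpi
    _ = A.ncard ^ W.ncard := by
        rw [← Nat.card_coe_set_eq, Nat.card_congr (Equiv.Set.univPi _), Nat.card_fun,
          Nat.card_coe_set_eq, Nat.card_coe_set_eq]

lemma patternCount_mono (hA : A.Finite) {W W' : Set (Zd d)} (hW' : W'.Finite) (h : W ⊆ W') :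
    patternCount A W ≤ patternCount A W' := by
  have himage : patternsOn A W = (· ∘ inclusion h) '' patternsOn A W' := by
    rw [patternsOn, patternsOn, image_image]
    rfl
  rw [patternCount, himage]
  exact ncard_image_le (patternsOn_finite hA hW')

lemma patternCount_biUnion_le {ι : Type*} (hA : A.Finite) (T : Finset ι) {S : ι → Set (Zd d)}
    (hS : ∀ t ∈ T, (S t).Finite) :
    patternCount A (⋃ t ∈ T, S t) ≤ ∏ t ∈ T, patternCount A (S t) := by
  have hsub (t : T) : S t ⊆ ⋃ t ∈ T, S t := subset_biUnion_of_mem (u := S) t.2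
  let F : (↥(⋃ t ∈ T, S t) → Zd d) → ∀ t : T, S t → Zd d := fun p t => p ∘ inclusion (hsub t)
  calc patternCount A (⋃ t ∈ T, S t) ≤ (univ.pi fun t : T => patternsOn A (S t)).ncard := by
        refine ncard_le_ncard_of_injOn F ?_ ?_ (Finite.pi fun t => patternsOn_finite hA (hS t t.2))
        · rintro _ ⟨π, hπ, rfl⟩ t -
          exact ⟨π, hπ, rfl⟩
        · intro p _ q _ h
          funext x
          obtain ⟨t, ht, hx⟩ := mem_iUnion₂.mp x.2
          exact congr_fun (congr_fun h ⟨t, ht⟩) ⟨x, hx⟩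
    _ = ∏ t ∈ T, patternCount A (S t) := by
        rw [ncard_univ_pi]
        exact Finset.prod_coe_sort T fun t => patternCount A (S t)

lemma patternCount_vadd (A W : Set (Zd d)) (v : Zd d) :
    patternCount A (v +ᵥ W) = patternCount A W := by
  let e : ↥(v +ᵥ W) → W := fun x => ⟨-v + x, mem_vadd_set_iff_neg_vadd_mem.mp x.2⟩
  have he : Surjective e := fun y =>
    ⟨⟨v + y, vadd_mem_vadd_set y.2⟩, Subtype.ext (neg_add_cancel_left v y)⟩
  let G : (W → Zd d) → (↥(v +ᵥ W) → Zd d) := fun p => (· + v) ∘ p ∘ e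
  have hG : Injective G := (add_left_injective v).comp_left.comp he.injective_comp_right
  have himage : patternsOn A (v +ᵥ W) = G '' patternsOn A W := by
    refine Subset.antisymm ?_ ?_
    · rintro _ ⟨σ, hσ, rfl⟩
      refine ⟨_, ⟨_, conj_vadd_mem_omega hσ (-v), rfl⟩, funext fun x => ?_⟩
      simp [G, e, domRestrict]
    · rintro _ ⟨_, ⟨π, hπ, rfl⟩, rfl⟩
      exact ⟨_, conj_vadd_mem_omega hπ v, rfl⟩
  rw [patternCount, himage, ncard_image_of_injective _ hG, patternCount]

end Patterns

section CosetReps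

variable {d : ℕ} {ι ι' : Type*} {M N : Zd d →+ Zd d} {c : ι → Zd d} {A : Set (Zd d)}
  {π : Zd d → Zd d}

/-- `ℤ^d` is the disjoint union of the cosets `c i + M(ℤ^d)`, and `M` is injective. -/
def IsCosetReps (M : Zd d →+ Zd d) (c : ι → Zd d) : Prop :=
  Bijective fun p : ι × Zd d => M p.2 + c p.1

namespace IsCosetReps

lemma injective_hom (hc : IsCosetReps M c) : Injective M := by
  obtain ⟨⟨i, -⟩, -⟩ := hc.2 0
  intro y y' h
  have := @hc.1 (i, y) (i, y') (by simp only [h])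
  exact (Prod.ext_iff.mp this).2

lemma comp (hc : IsCosetReps M c) {c' : ι' → Zd d} (hc' : IsCosetReps N c') :
    IsCosetReps (M.comp N) fun p : ι × ι' => M (c' p.2) + c p.1 := by
  have h : (fun q : (ι × ι') × Zd d => M.comp N q.2 + (M (c' q.1.2) + c q.1.1)) =
      (fun p : ι × Zd d => M p.2 + c p.1) ∘ Prod.map id (fun p : ι' × Zd d => N p.2 + c' p.1) ∘
        Equiv.prodAssoc ι ι' (Zd d) := by
    funext ⟨⟨i, i'⟩, z⟩
    simp [add_assoc]
  rw [IsCosetReps, h]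
  exact Bijective.comp hc ((bijective_id.prodMap hc').comp (Equiv.prodAssoc _ _ _).bijective)

lemma bijective_mk (hc : IsCosetReps M c) :
    Bijective fun i => (c i : Zd d ⧸ M.range) := by
  refine ⟨fun i i' h => ?_, fun x => ?_⟩
  · obtain ⟨y, hy⟩ := QuotientAddGroup.eq_iff_sub_mem.mp h
    have := @hc.1 (i', y) (i, 0) (by simp only [hy, map_zero]; abel)
    exact (Prod.ext_iff.mp this).1.symm
  · obtain ⟨x, rfl⟩ := QuotientAddGroup.mk_surjective x
    obtain ⟨⟨i, y⟩, rfl⟩ := hc.2 x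
    exact ⟨i, QuotientAddGroup.eq_iff_sub_mem.mpr ⟨-y, by simp⟩⟩

lemma index_eq (hc : IsCosetReps M c) : M.range.index = Nat.card ι :=
  (Nat.card_eq_of_bijective _ hc.bijective_mk).symm

end IsCosetReps

lemma isCosetReps_of_bijective_mk (hM : Injective M)
    (hc : Bijective fun i => (c i : Zd d ⧸ M.range)) : IsCosetReps M c := by
  refine ⟨fun ⟨i, y⟩ ⟨i', y'⟩ h => ?_, fun x => ?_⟩
  · have hi : i = i' := hc.1 <| QuotientAddGroup.eq_iff_sub_mem.mpr
      ⟨y' - y, by simp only at h; rw [map_sub]; linear_combination -h⟩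
    subst hi
    simp only [add_left_inj] at h
    rw [hM h]
  · obtain ⟨i, hi⟩ := hc.2 x
    obtain ⟨y, hy⟩ := QuotientAddGroup.eq_iff_sub_mem.mp hi.symm
    exact ⟨(i, y), by simp [hy]⟩

lemma exists_isCosetReps (hM : Injective M) (hidx : M.range.index ≠ 0) :
    ∃ c : Fin M.range.index → Zd d, IsCosetReps M c := by
  have := AddSubgroup.index_ne_zero_iff_finite.mp hidx
  let e := (Finite.equivFin (Zd d ⧸ M.range)).symm
  refine ⟨fun i => (e i).out, isCosetReps_of_bijective_mk hM ?_⟩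
  simp only [QuotientAddGroup.out_eq']
  exact e.bijective

/-- The maps `π_i = M⁻¹ ∘ τ_{c i}⁻¹ ∘ π ∘ τ_{c i} ∘ M`; `invFun M` inverts `M` only on its range, which
contains `π (M y + c i) - c i` when `π ∈ Ω(M(A))`. -/
def cosetComponents (M : Zd d →+ Zd d) (c : ι → Zd d) (π : Zd d → Zd d) (i : ι) (y : Zd d) :
    Zd d :=
  invFun M (π (M y + c i) - c i)

lemma cosetComponents_of_apply_eq (hM : Injective M) {i : ι} {y z : Zd d}
    (h : π (M y + c i) = M z + c i) : cosetComponents M c π i y = z := by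
  rw [cosetComponents, h, add_sub_cancel_right, leftInverse_invFun hM]

lemma apply_eq_cosetComponents (hM : Injective M) (hπ : π ∈ Omega d (M '' A)) (i : ι)
    (y : Zd d) : π (M y + c i) = M (cosetComponents M c π i y) + c i := by
  obtain ⟨a, -, ha⟩ := hπ.2 (M y + c i)
  have h : π (M y + c i) = M (y + a) + c i := by
    rw [map_add, ha]
    abel
  rw [h, cosetComponents_of_apply_eq hM h]

lemma cosetComponents_mem_omega (hc : IsCosetReps M c) (hπ : π ∈ Omega d (M '' A)) (i : ι) :
    cosetComponents M c π i ∈ Omega d A := by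
  have hM := hc.injective_hom
  refine ⟨⟨fun y y' h => ?_, fun z => ?_⟩, fun y => ?_⟩
  · have : π (M y + c i) = π (M y' + c i) := by
      rw [apply_eq_cosetComponents hM hπ, apply_eq_cosetComponents hM hπ, h]
    exact hM (add_right_cancel (hπ.1.1 this))
  · obtain ⟨x, hx⟩ := hπ.1.2 (M z + c i)
    obtain ⟨⟨j, y⟩, rfl⟩ := hc.2 x
    rw [apply_eq_cosetComponents hM hπ] at hx
    obtain ⟨rfl, hy⟩ := Prod.ext_iff.mp (@hc.1 (j, _) (i, z) hx)
    exact ⟨y, hy⟩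
  · have h := hπ.2 (M y + c i)
    rwa [apply_eq_cosetComponents hM hπ, add_sub_add_right_eq_sub, ← map_sub,
      hM.mem_set_image] at h

lemma cosetComponents_conj_translate (hM : Injective M) (hπ : π ∈ Omega d (M '' A)) (m : Zd d)
    (i : ι) : cosetComponents M c (fun x => π (x - M m) + M m) i =
      fun y => cosetComponents M c π i (y - m) + m := by
  funext y
  refine cosetComponents_of_apply_eq hM ?_
  rw [show M y + c i - M m = M (y - m) + c i by rw [map_sub]; abel,
    apply_eq_cosetComponents hM hπ, map_add]
  abel

namespace IsCosetReps

variable (hc : IsCosetReps M c)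
include hc

def glue (f : ι → Zd d → Zd d) : Zd d → Zd d :=
  Equiv.ofBijective _ hc ∘ (fun p => (p.1, f p.1 p.2)) ∘ (Equiv.ofBijective _ hc).symm

lemma glue_apply (f : ι → Zd d → Zd d) (i : ι) (y : Zd d) :
    hc.glue f (M y + c i) = M (f i y) + c i := by
  have : (Equiv.ofBijective _ hc).symm (M y + c i) = (i, y) :=
    (Equiv.ofBijective _ hc).symm_apply_apply (i, y)
  rw [glue, comp_apply, comp_apply, this]
  rfl

lemma glue_mem_omega {f : ι → Zd d → Zd d} (hf : ∀ i, f i ∈ Omega d A) :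
    hc.glue f ∈ Omega d (M '' A) := by
  let shear := Equiv.prodShear (Equiv.refl ι) fun i => Equiv.ofBijective _ (hf i).1
  refine ⟨((Equiv.ofBijective _ hc).bijective.comp shear.bijective).comp
    (Equiv.ofBijective _ hc).symm.bijective, fun x => ?_⟩
  obtain ⟨⟨i, y⟩, rfl⟩ := hc.2 x
  refine ⟨f i y - y, (hf i).2 y, ?_⟩
  simp only [glue_apply, map_sub]
  abel

lemma cosetComponents_glue (f : ι → Zd d → Zd d) : cosetComponents M c (hc.glue f) = f :=
  funext fun i => funext fun y => cosetComponents_of_apply_eq hc.injective_hom (hc.glue_apply f i y)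

lemma glue_cosetComponents (hπ : π ∈ Omega d (M '' A)) : hc.glue (cosetComponents M c π) = π := by
  funext x
  obtain ⟨⟨i, y⟩, rfl⟩ := hc.2 x
  rw [glue_apply, apply_eq_cosetComponents hc.injective_hom hπ]

lemma bijOn_cosetComponents :
    BijOn (cosetComponents M c) (Omega d (M '' A)) {f | ∀ i, f i ∈ Omega d A} :=
  InvOn.bijOn ⟨fun _ hπ => hc.glue_cosetComponents hπ, fun f _ => hc.cosetComponents_glue f⟩
    (fun _ hπ i => cosetComponents_mem_omega hc hπ i) fun _ hf => hc.glue_mem_omega hf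

lemma patternCount_image_window [Finite ι] (A B : Set (Zd d)) :
    patternCount (M '' A) (range fun p : ι × B => M p.2 + c p.1) = patternCount A B ^ Nat.card ι := by
  have hM := hc.injective_hom
  set W := range fun p : ι × B => M p.2 + c p.1
  let G : (W → Zd d) → ι → B → Zd d := fun p i y => invFun M (p ⟨_, (i, y), rfl⟩ - c i)
  have himage : G '' patternsOn (M '' A) W = univ.pi fun _ : ι => patternsOn A B := by
    calc G '' patternsOn (M '' A) W
        = Pi.map (fun _ => B.domRestrict) '' (cosetComponents M c '' Omega d (M '' A)) := by
          rw [patternsOn, image_image, image_image]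
          rfl
      _ = Pi.map (fun _ => B.domRestrict) '' univ.pi fun _ : ι => Omega d A := by
          rw [hc.bijOn_cosetComponents.image_eq]
          congr 1
          ext f
          simp
      _ = univ.pi fun _ : ι => patternsOn A B := piMap_image_univ_pi _ _
  have hinj : InjOn G (patternsOn (M '' A) W) := by
    rintro _ ⟨π, hπ, rfl⟩ _ ⟨π', hπ', rfl⟩ h
    funext ⟨_, ⟨i, y⟩, rfl⟩
    have hy : cosetComponents M c π i y = cosetComponents M c π' i y := congr_fun (congr_fun h i) y
    simp only [domRestrict, apply_eq_cosetComponents hM hπ, apply_eq_cosetComponents hM hπ', hy]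
  have := Fintype.ofFinite ι
  rw [patternCount, ← hinj.ncard_image, himage, ncard_univ_pi, Finset.prod_const,
    Finset.card_univ, Fintype.card_eq_nat_card, patternCount]

end IsCosetReps

end CosetReps

section Entropy

variable {d : ℕ} {ι : Type*} {M : Zd d →+ Zd d} {c : ι → Zd d} {A B : Set (Zd d)}

def entropyApprox (A : Set (Zd d)) (n : ℕ) : ℝ := Real.log (patternCount A (box d n)) / (n : ℝ) ^ d

lemma entropy_eq_limsup (A : Set (Zd d)) : entropy d A = limsup (entropyApprox A) atTop := by
  simp only [entropy, patterns_eq_patternsOn]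
  rfl

lemma entropyApprox_nonneg (A : Set (Zd d)) (n : ℕ) : 0 ≤ entropyApprox A n :=
  div_nonneg (Real.log_natCast_nonneg _) (by positivity)

lemma entropyApprox_le (hA : A.Finite) (n : ℕ) : entropyApprox A n ≤ Real.log A.ncard := by
  rcases (pow_nonneg (Nat.cast_nonneg n) d : (0 : ℝ) ≤ (n : ℝ) ^ d).eq_or_lt with h | h
  · rw [entropyApprox, ← h, div_zero]
    exact Real.log_natCast_nonneg _
  rw [entropyApprox, div_le_iff₀ h]
  calc Real.log (patternCount A (box d n)) ≤ Real.log ((A.ncard ^ (box d n).ncard : ℕ) : ℝ) :=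
        log_natCast_le_log_natCast (patternCount_le_pow hA (finite_box n))
    _ = Real.log A.ncard * (n : ℝ) ^ d := by
        rw [Nat.cast_pow, Real.log_pow, ncard_box, Nat.cast_pow, mul_comm]

lemma isBoundedUnder_entropyApprox (hA : A.Finite) :
    IsBoundedUnder (· ≤ ·) atTop (entropyApprox A) :=
  isBoundedUnder_of ⟨_, entropyApprox_le hA⟩

lemma isCoboundedUnder_entropyApprox (A : Set (Zd d)) {l : Filter ℕ} [l.NeBot] :
    IsCoboundedUnder (· ≤ ·) l (entropyApprox A) :=
  isCoboundedUnder_le_of_le l (entropyApprox_nonneg A)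

lemma entropy_le_of_log_patternCount_le {C : ℕ} {b : ℝ}
    (h : ∀ n : ℕ, Real.log (patternCount B (box d n)) ≤ ((n : ℝ) + C) ^ d * b) :
    entropy d B ≤ b := by
  have hlim : Tendsto (fun n : ℕ => (((n : ℝ) + C) / n) ^ d * b) atTop (nhds b) := by
    have h1 : Tendsto (fun n : ℕ => 1 + (C : ℝ) / n) atTop (nhds 1) := by
      simpa using (tendsto_const_div_atTop_nhds_zero_nat (C : ℝ)).const_add 1
    have h2 : Tendsto (fun n : ℕ => ((n : ℝ) + C) / n) atTop (nhds 1) := by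
      refine h1.congr' ?_
      filter_upwards [eventually_ne_atTop 0] with n hn
      field_simp
    simpa using (h2.pow d).mul_const b
  have hle : ∀ᶠ n in atTop, entropyApprox B n ≤ (((n : ℝ) + C) / n) ^ d * b := by
    filter_upwards [eventually_ne_atTop 0] with n hn
    rw [entropyApprox, div_le_iff₀ (by positivity), div_pow, div_mul_eq_mul_div,
      div_mul_cancel₀ _ (by positivity)]
    exact h n
  rw [entropy_eq_limsup, ← hlim.limsup_eq]
  exact limsup_le_limsup hle (isCoboundedUnder_entropyApprox B) hlim.isBoundedUnder_le

lemma le_entropy_of_forall_le (hA : A.Finite) {x : ℝ} (h : ∀ n, 0 < n → x ≤ entropyApprox A n) :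
    x ≤ entropy d A := by
  rw [entropy_eq_limsup]
  exact le_limsup_of_frequently_le ((eventually_gt_atTop 0).mono h).frequently
    (isBoundedUnder_entropyApprox hA)

lemma IsCosetReps.exists_cover_box [Finite ι] (hc : IsCosetReps M c) :
    ∃ C : ℕ, ∀ n : ℕ, ∃ T : Finset (Zd d),
      box d n ⊆ ⋃ t ∈ T, M t +ᵥ range c ∧ T.card * Nat.card ι ≤ (n + C) ^ d := by
  obtain ⟨D, hD⟩ := Finite.bddAbove_range fun p : ι × Fin d => (c p.1 p.2).natAbs
  have hcD (i : ι) (j : Fin d) : (c i j).natAbs ≤ D := hD ⟨(i, j), rfl⟩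
  refine ⟨4 * D + 2, fun n => ?_⟩
  have hfin : (M ⁻¹' (box d n - range c)).Finite :=
    ((finite_box n).sub (finite_range c)).preimage hc.injective_hom.injOn
  refine ⟨hfin.toFinset, fun x hx => ?_, ?_⟩
  · obtain ⟨⟨i, t⟩, rfl⟩ := hc.2 x
    refine mem_biUnion (hfin.mem_toFinset.mpr ⟨_, hx, _, mem_range_self i, add_sub_cancel_right _ _⟩)
      ⟨c i, mem_range_self i, rfl⟩
  · let R : Set (Zd d) := (fun _ : Fin d => -(2 * D + 1 : ℤ)) +ᵥ box d (n + (4 * D + 2))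
    have hmaps : MapsTo (fun p : Zd d × ι => M p.1 + c p.2) (↑hfin.toFinset ×ˢ univ) R := by
      rintro ⟨t, i⟩ ⟨ht, -⟩
      obtain ⟨x, hx, _, ⟨i', rfl⟩, hxt⟩ := hfin.mem_toFinset.mp ht
      refine mem_vadd_box.mpr fun j => ?_
      have hxt' := congr_fun hxt j
      have := hx j
      have := hcD i j
      have := hcD i' j
      simp only [Pi.sub_apply, Pi.add_apply] at hxt' ⊢
      push_cast
      omega
    have hinj : InjOn (fun p : Zd d × ι => M p.1 + c p.2) (↑hfin.toFinset ×ˢ univ) :=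
      fun ⟨t, i⟩ _ ⟨t', i'⟩ _ h => Prod.ext_iff.mpr
        (And.symm (Prod.ext_iff.mp (@hc.1 (i, t) (i', t') h)))
    have := ncard_le_ncard_of_injOn _ hmaps hinj (finite_box _).vadd_set
    rwa [ncard_prod, ncard_coe_finset, ncard_univ, ncard_vadd_set, ncard_box] at this

theorem IsCosetReps.entropy_le [Finite ι] (hc : IsCosetReps M c) (hB : B.Finite) :
    entropy d B ≤ Real.log (patternCount B (range c)) / Nat.card ι := by
  obtain ⟨C, hC⟩ := hc.exists_cover_box
  have hι : 0 < Nat.card ι := by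
    obtain ⟨⟨i, -⟩, -⟩ := hc.2 0
    exact Nat.card_pos_iff.mpr ⟨⟨i⟩, inferInstance⟩
  refine entropy_le_of_log_patternCount_le (C := C) fun n => ?_
  obtain ⟨T, hcover, hcard⟩ := hC n
  have hcount : patternCount B (box d n) ≤ patternCount B (range c) ^ T.card :=
    calc patternCount B (box d n) ≤ patternCount B (⋃ t ∈ T, M t +ᵥ range c) :=
          patternCount_mono hB (T.finite_toSet.biUnion fun _ _ => (finite_range c).vadd_set) hcover
      _ ≤ ∏ t ∈ T, patternCount B (M t +ᵥ range c) :=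
          patternCount_biUnion_le hB T fun _ _ => (finite_range c).vadd_set
      _ = patternCount B (range c) ^ T.card := by
          simp only [patternCount_vadd, Finset.prod_const]
  have hcard' : (T.card : ℝ) * Nat.card ι ≤ ((n : ℝ) + C) ^ d := by exact_mod_cast hcard
  calc Real.log (patternCount B (box d n)) ≤ T.card * Real.log (patternCount B (range c)) := by
        simpa only [Nat.cast_pow, Real.log_pow] using log_natCast_le_log_natCast hcount
    _ = T.card * Nat.card ι * (Real.log (patternCount B (range c)) / Nat.card ι) := by
        field_simp
    _ ≤ ((n : ℝ) + C) ^ d * (Real.log (patternCount B (range c)) / Nat.card ι) :=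
        mul_le_mul_of_nonneg_right hcard' (by positivity)

end Entropy

section Scaling

variable {d : ℕ} {A : Set (Zd d)}

lemma ediv_emod_of_mem_box {q : ℕ} (hq : 0 < q) {r : Zd d} (hr : r ∈ box d q) (y : Zd d) (j : Fin d) :
    (q • y + r) j / q = y j ∧ (q • y + r) j % q = r j :=
  (Int.ediv_emod_unique (by exact_mod_cast hq)).mpr
    ⟨by simp [nsmul_eq_mul, add_comm], (hr j).1, (hr j).2⟩

lemma isCosetReps_box {q : ℕ} (hq : 0 < q) :
    IsCosetReps (DistribSMul.toAddMonoidHom (Zd d) q) fun r : box d q => (r : Zd d) := by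
  have hq' : (0 : ℤ) < q := by exact_mod_cast hq
  refine ⟨fun ⟨r, y⟩ ⟨r', y'⟩ h => ?_, fun x => ?_⟩
  · simp only [DistribSMul.toAddMonoidHom_apply] at h
    have key (j : Fin d) : y j = y' j ∧ r.1 j = r'.1 j := by
      obtain ⟨h1, h2⟩ := ediv_emod_of_mem_box hq r.2 y j
      obtain ⟨h1', h2'⟩ := ediv_emod_of_mem_box hq r'.2 y' j
      rw [h] at h1 h2
      exact ⟨h1.symm.trans h1', h2.symm.trans h2'⟩
    exact Prod.ext (Subtype.ext (funext fun j => (key j).2)) (funext fun j => (key j).1)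
  · refine ⟨(⟨fun j => x j % q, fun j => ⟨Int.emod_nonneg _ hq'.ne', Int.emod_lt_of_pos _ hq'⟩⟩,
      fun j => x j / q), funext fun j => ?_⟩
    simp [nsmul_eq_mul, Int.mul_ediv_add_emod]

lemma range_nsmul_add_box {q : ℕ} (hq : 0 < q) (m : ℕ) :
    (range fun p : box d q × box d m => DistribSMul.toAddMonoidHom (Zd d) q p.2 + p.1) =
      box d (q * m) := by
  ext x
  constructor
  · rintro ⟨⟨r, y⟩, rfl⟩ j
    have := r.2 j
    have := y.2 j
    simp only [Pi.add_apply, DistribSMul.toAddMonoidHom_apply, nsmul_eq_mul,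
      Pi.mul_apply, Pi.natCast_apply, Nat.cast_mul]
    constructor <;> nlinarith
  · intro hx
    obtain ⟨⟨r, y⟩, hxy⟩ := (isCosetReps_box hq).2 x
    refine ⟨(r, ⟨y, fun j => ?_⟩), hxy⟩
    have h := (ediv_emod_of_mem_box hq r.2 y j).1
    simp only [DistribSMul.toAddMonoidHom_apply] at hxy
    rw [hxy] at h
    rw [← h]
    refine ⟨Int.ediv_nonneg (hx j).1 (by positivity), (Int.ediv_lt_iff_lt_mul (by positivity)).mpr ?_⟩
    rw [mul_comm]
    exact_mod_cast (hx j).2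

lemma entropy_le_entropy_image_nsmul (hA : A.Finite) {q : ℕ} (hq : 0 < q) :
    entropy d A ≤ entropy d (DistribSMul.toAddMonoidHom (Zd d) q '' A) := by
  have happrox : entropyApprox A =
      entropyApprox (DistribSMul.toAddMonoidHom (Zd d) q '' A) ∘ (q * ·) := by
    funext m
    have h := (isCosetReps_box hq).patternCount_image_window A (box d m)
    rw [range_nsmul_add_box hq, Nat.card_coe_set_eq, ncard_box] at h
    simp only [comp_apply, entropyApprox, h, Nat.cast_pow, Real.log_pow, Nat.cast_mul, mul_pow]
    exact (mul_div_mul_left _ _ (by positivity)).symm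
  rw [entropy_eq_limsup, entropy_eq_limsup, happrox]
  exact (tendsto_atTop_mono (fun m => Nat.le_mul_of_pos_left m hq) tendsto_id).limsup_comp_le_limsup
    (isCoboundedUnder_entropyApprox _) (isBoundedUnder_entropyApprox (hA.image _))

lemma exists_comp_eq_index_nsmul {M : Zd d →+ Zd d} (hM : Injective M) (hidx : M.range.index ≠ 0) :
    ∃ N : Zd d →+ Zd d, Injective N ∧ N.range.index ≠ 0 ∧ ∀ x, N (M x) = M.range.index • x := by
  set k := M.range.index
  have hMN (x : Zd d) : M (invFun M (k • x)) = k • x := invFun_eq (M.range.nsmul_index_mem x)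
  let N : Zd d →+ Zd d := AddMonoidHom.mk' (fun x => invFun M (k • x)) fun a b =>
    hM (by rw [map_add, hMN, hMN, hMN, smul_add])
  have hNM (x : Zd d) : N (M x) = k • x := by
    show invFun M (k • M x) = k • x
    rw [← map_nsmul, leftInverse_invFun hM]
  refine ⟨N, fun a b h => smul_right_injective (Zd d) hidx ?_, ?_, hNM⟩
  · exact (hMN a).symm.trans ((congr_arg M h).trans (hMN b))
  · have hle : (DistribSMul.toAddMonoidHom (Zd d) k).range ≤ N.range := by
      rintro _ ⟨x, rfl⟩
      exact ⟨M x, hNM x⟩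
    have hk : (DistribSMul.toAddMonoidHom (Zd d) k).range.index ≠ 0 := by
      rw [(isCosetReps_box (Nat.pos_of_ne_zero hidx)).index_eq, Nat.card_coe_set_eq, ncard_box]
      exact pow_ne_zero d hidx
    exact ne_zero_of_dvd_ne_zero hk (AddSubgroup.index_dvd_of_le hle)

end Scaling

section Image

variable {d : ℕ} {M : Zd d →+ Zd d} {A B : Set (Zd d)}

theorem entropy_image_le (hM : Injective M) (hidx : M.range.index ≠ 0) (hB : B.Finite) :
    entropy d (M '' B) ≤ entropy d B := by
  obtain ⟨c, hc⟩ := exists_isCosetReps hM hidx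
  refine le_entropy_of_forall_le hB fun m hm => ?_
  have h := (hc.comp (isCosetReps_box hm)).entropy_le (hB.image M)
  rwa [hc.patternCount_image_window, Nat.card_prod, Nat.card_coe_set_eq, ncard_box, Nat.cast_pow,
    Real.log_pow, Nat.cast_mul, Nat.cast_pow, mul_div_mul_left _ _ (by simpa using hidx)] at h

theorem entropy_image_eq (hA : A.Finite) (hM : Injective M) (hidx : M.range.index ≠ 0) :
    entropy d (M '' A) = entropy d A := by
  refine (entropy_image_le hM hidx hA).antisymm ?_
  obtain ⟨N, hN, hNidx, hNM⟩ := exists_comp_eq_index_nsmul hM hidx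
  calc entropy d A ≤ entropy d (DistribSMul.toAddMonoidHom (Zd d) M.range.index '' A) :=
        entropy_le_entropy_image_nsmul hA (Nat.pos_of_ne_zero hidx)
    _ = entropy d (N '' (M '' A)) := by
        rw [image_image]
        simp only [hNM]
        rfl
    _ ≤ entropy d (M '' A) := entropy_image_le hN hNidx (hA.image M)

end Image

end

theorem endomorphism_image_conjugacy_general
    (d : ℕ) (A : Set (Zd d)) (hA : A.Finite)
    (M : Zd d →+ Zd d) (hM : Function.Injective M)
    (k : ℕ) (hk : 0 < k) (hidx : (AddMonoidHom.range M).index = k) :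
    (∃ Φ : (Zd d → Zd d) → (Fin k → Zd d → Zd d),
      Set.BijOn Φ (Omega d (⇑M '' A)) {f : Fin k → Zd d → Zd d | ∀ i, f i ∈ Omega d A} ∧
      ∀ π ∈ Omega d (⇑M '' A), ∀ m : Zd d, ∀ i : Fin k,
        Φ (fun x => π (x - M m) + M m) i = fun x => Φ π i (x - m) + m) ∧
    entropy d A = entropy d (⇑M '' A) := by
  subst hidx
  obtain ⟨c, hc⟩ := exists_isCosetReps hM hk.ne'
  exact ⟨⟨cosetComponents M c, hc.bijOn_cosetComponents,
    fun π hπ m i => cosetComponents_conj_translate hM hπ m i⟩, (entropy_image_eq hA hM hk.ne').symm⟩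

/-- for an injective additive endomorphism `M` of `ℤ^d` whose range has
finite index `k`, there is a bijection `Φ : Ω(M(A)) → Ω(A)^k` intertwining the
conjugation action of the translation `τ_{Mm}` on `Ω(M(A))` with the (diagonal)
conjugation action of `τ_m` on `Ω(A)^k`; in particular `h(Ω(A)) = h(Ω(M(A)))`. -/
theorem endomorphism_image_conjugacy
    (d : ℕ) (hd : 1 ≤ d) (A : Set (Zd d)) (hA : A.Finite)
    (M : Zd d →+ Zd d) (hM : Function.Injective M)
    (k : ℕ) (hk : 0 < k) (hidx : (AddMonoidHom.range M).index = k) :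
    (∃ Φ : (Zd d → Zd d) → (Fin k → Zd d → Zd d),
      Set.BijOn Φ (Omega d (⇑M '' A)) {f : Fin k → Zd d → Zd d | ∀ i, f i ∈ Omega d A} ∧
      ∀ π ∈ Omega d (⇑M '' A), ∀ m : Zd d, ∀ i : Fin k,
        Φ (fun x => π (x - M m) + M m) i = fun x => Φ π i (x - m) + m) ∧
    entropy d A = entropy d (⇑M '' A) :=
  endomorphism_image_conjugacy_general d A hA M hM k hk hidx
end

section
/- Let A_⊕ = {(0,0),(1,0),(−1,0),(0,1),(0,−1)} ⊆ ℤ². Let n₁, n₂ ≥ 1, let U = {0,…,n₁−1} × {0,…,n₂−1} ⊆ ℤ², and let f : U → ℤ² satisfy f(u) − u ∈ A_⊕ for all u ∈ U. Then there exists π ∈ Ω(A_⊕) with π(u) = f(u) for all u ∈ U if and only if f is injective and Int(U, A_⊕) := {u ∈ U : u − a ∈ U for every a ∈ A_⊕} is contained in the image f(U). -/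
/-- The restricting set `A_⊕ = {(0,0),(1,0),(−1,0),(0,1),(0,−1)} ⊆ ℤ²`. -/
def A_oplus : Set (ℤ × ℤ) := {(0, 0), (1, 0), (-1, 0), (0, 1), (0, -1)}

/-- `Ω(A)`: bijections `π : ℤ² → ℤ²` with `π x − x ∈ A` for all `x`. -/
def Omega2 (A : Set (ℤ × ℤ)) : Set ((ℤ × ℤ) → (ℤ × ℤ)) :=
  {π | Function.Bijective π ∧ ∀ x : ℤ × ℤ, π x - x ∈ A}

/-- The box `{0,…,n₁−1} × {0,…,n₂−1} ⊆ ℤ²`. -/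
def box2 (n₁ n₂ : ℕ) : Set (ℤ × ℤ) :=
  {x | 0 ≤ x.1 ∧ x.1 < (n₁ : ℤ) ∧ 0 ≤ x.2 ∧ x.2 < (n₂ : ℤ)}

/-- The interior of `U` with respect to `A`: `{u ∈ U : u − a ∈ U for all a ∈ A}`. -/
def interior2 (U A : Set (ℤ × ℤ)) : Set (ℤ × ℤ) :=
  {u ∈ U | ∀ a ∈ A, u - a ∈ U}

/-!
The forward direction is immediate. Conversely, write `U` for the box. Pushing every cell one
step "outwards" (`outwardStep`) is injective off `Int(U, A_⊕)`, moves every such cell out of `U`,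
and moves every cell outside `U` out of the `A_⊕`-neighbourhood of `U`, which contains `f(U)`.
So it gives injections `Uᶜ → f(U)ᶜ` and `f(U)ᶜ → Uᶜ` along unit steps, and since `A_⊕ = -A_⊕` the
relational Schröder–Bernstein theorem turns them into a bijection `Uᶜ → f(U)ᶜ` along `A_⊕`, which
together with `f` on `U` is the required `π`.
-/

open Function

theorem injOn_and_interior2_subset_image_of_mem_Omega2 {A U : Set (ℤ × ℤ)} {f π : ℤ × ℤ → ℤ × ℤ}
    (hπ : π ∈ Omega2 A) (hπf : ∀ u ∈ U, π u = f u) :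
    Set.InjOn f U ∧ interior2 U A ⊆ f '' U := by
  obtain ⟨hbij, hπA⟩ := hπ
  refine ⟨fun u hu v hv huv => hbij.1 (by rw [hπf u hu, hπf v hv, huv]), ?_⟩
  rintro w ⟨-, hw⟩
  obtain ⟨v, rfl⟩ := hbij.2 w
  have hv : v ∈ U := by simpa using hw _ (hπA v)
  exact ⟨v, hv, (hπf v hv).symm⟩

theorem exists_mem_Omega2_eqOn_of_injective {A U : Set (ℤ × ℤ)} {f : ℤ × ℤ → ℤ × ℤ}
    (hfA : ∀ u ∈ U, f u - u ∈ A) (hf : Set.InjOn f U)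
    {F : ↥Uᶜ → ↥(f '' U)ᶜ} (hF : Injective F) (hFA : ∀ x, (F x : ℤ × ℤ) - x ∈ A)
    {G : ↥(f '' U)ᶜ → ↥Uᶜ} (hG : Injective G) (hGA : ∀ y : ↥(f '' U)ᶜ, (y : ℤ × ℤ) - G y ∈ A) :
    ∃ π ∈ Omega2 A, ∀ u ∈ U, π u = f u := by
  classical
  obtain ⟨h, hh, hhA⟩ :=
    Embedding.schroeder_bernstein_of_rel hF hG (fun x y => (y : ℤ × ℤ) - x ∈ A) hFA hGA
  let π : ℤ × ℤ ≃ ℤ × ℤ := (Equiv.Set.sumCompl U).symm.trans <|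
    (Equiv.sumCongr (Equiv.Set.imageOfInjOn f U hf) (Equiv.ofBijective h hh)).trans
      (Equiv.Set.sumCompl (f '' U))
  have hπU : ∀ u ∈ U, π u = f u := fun u hu => by
    simp only [π, Equiv.trans_apply, Equiv.Set.sumCompl_symm_apply_of_mem hu,
      Equiv.sumCongr_apply, Sum.map_inl, Equiv.Set.sumCompl_apply_inl]
    rfl
  have hπUc : ∀ x (hx : x ∉ U), π x = h ⟨x, hx⟩ := fun x hx => by
    simp [π, Equiv.Set.sumCompl_symm_apply_of_notMem hx]
  refine ⟨π, ⟨π.bijective, fun x => ?_⟩, hπU⟩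
  by_cases hx : x ∈ U
  · rw [hπU x hx]; exact hfA x hx
  · rw [hπUc x hx]; exact hhA ⟨x, hx⟩

/-- Off `Int(box2 n₁ n₂, A_⊕)` the four cases land in four disjoint regions outside the box:
above, below, left and right of it. -/
def outwardStep (n₂ : ℕ) (x : ℤ × ℤ) : ℤ × ℤ :=
  if (n₂ : ℤ) ≤ x.2 + 1 then (0, 1)
  else if x.2 ≤ 0 then (0, -1)
  else if x.1 ≤ 0 then (-1, 0)
  else (1, 0)

theorem outwardStep_mem_A_oplus (n₂ : ℕ) (x : ℤ × ℤ) : outwardStep n₂ x ∈ A_oplus := by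
  unfold outwardStep A_oplus; split_ifs <;> simp

theorem neg_outwardStep_mem_A_oplus (n₂ : ℕ) (x : ℤ × ℤ) : -outwardStep n₂ x ∈ A_oplus := by
  unfold outwardStep A_oplus; split_ifs <;> simp

theorem mem_interior2_box2_A_oplus {n₁ n₂ : ℕ} {u : ℤ × ℤ} :
    u ∈ interior2 (box2 n₁ n₂) A_oplus ↔
      1 ≤ u.1 ∧ u.1 + 2 ≤ n₁ ∧ 1 ≤ u.2 ∧ u.2 + 2 ≤ n₂ := by
  simp only [interior2, box2, A_oplus, Set.mem_ofPred_eq, Set.forall_mem_insert,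
    Set.mem_singleton_iff, forall_eq, Prod.fst_sub, Prod.snd_sub]
  omega

theorem injOn_add_outwardStep {n₁ n₂ : ℕ} :
    Set.InjOn (fun x => x + outwardStep n₂ x) (interior2 (box2 n₁ n₂) A_oplus)ᶜ := by
  intro x hx y hy hxy
  simp only [Set.mem_compl_iff, mem_interior2_box2_A_oplus] at hx hy
  simp only [outwardStep, Prod.ext_iff] at hxy ⊢
  split_ifs at hxy <;> simp only [Prod.fst_add, Prod.snd_add] at hxy <;> omega

theorem add_outwardStep_notMem_box2 {n₁ n₂ : ℕ} {x : ℤ × ℤ}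
    (hx : x ∉ interior2 (box2 n₁ n₂) A_oplus) : x + outwardStep n₂ x ∉ box2 n₁ n₂ := by
  rw [mem_interior2_box2_A_oplus] at hx
  simp only [outwardStep, box2, Set.mem_ofPred_eq]
  split_ifs <;> simp only [Prod.fst_add, Prod.snd_add] <;> omega

theorem add_outwardStep_sub_notMem_box2 {n₁ n₂ : ℕ} {x a : ℤ × ℤ} (hx : x ∉ box2 n₁ n₂)
    (ha : a ∈ A_oplus) : x + outwardStep n₂ x - a ∉ box2 n₁ n₂ := by
  simp only [box2, A_oplus, Set.mem_ofPred_eq, Set.mem_insert_iff, Set.mem_singleton_iff] at hx ha ⊢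
  unfold outwardStep
  rcases ha with rfl | rfl | rfl | rfl | rfl <;> split_ifs <;>
    simp only [Prod.fst_add, Prod.snd_add, Prod.fst_sub, Prod.snd_sub] <;> omega

theorem exists_mem_Omega2_A_oplus_eqOn_box2 {n₁ n₂ : ℕ} {f : ℤ × ℤ → ℤ × ℤ}
    (hfA : ∀ u ∈ box2 n₁ n₂, f u - u ∈ A_oplus) (hf : Set.InjOn f (box2 n₁ n₂))
    (hint : interior2 (box2 n₁ n₂) A_oplus ⊆ f '' box2 n₁ n₂) :
    ∃ π ∈ Omega2 A_oplus, ∀ u ∈ box2 n₁ n₂, π u = f u := by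
  let e : ℤ × ℤ → ℤ × ℤ := fun x => x + outwardStep n₂ x
  have hUc : (box2 n₁ n₂)ᶜ ⊆ (interior2 (box2 n₁ n₂) A_oplus)ᶜ :=
    Set.compl_subset_compl.2 (Set.sep_subset _ _)
  have hfUc : (f '' box2 n₁ n₂)ᶜ ⊆ (interior2 (box2 n₁ n₂) A_oplus)ᶜ :=
    Set.compl_subset_compl.2 hint
  have hF : Set.MapsTo e (box2 n₁ n₂)ᶜ (f '' box2 n₁ n₂)ᶜ := by
    rintro x hx ⟨u, hu, hux⟩
    refine add_outwardStep_sub_notMem_box2 hx (hfA u hu) ?_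
    simpa [hux, e] using hu
  have hG : Set.MapsTo e (f '' box2 n₁ n₂)ᶜ (box2 n₁ n₂)ᶜ :=
    fun y hy => add_outwardStep_notMem_box2 (hfUc hy)
  exact exists_mem_Omega2_eqOn_of_injective hfA hf
    (hF.restrict_inj.2 (injOn_add_outwardStep.mono hUc))
    (fun x => by simpa [e] using outwardStep_mem_A_oplus n₂ x)
    (hG.restrict_inj.2 (injOn_add_outwardStep.mono hfUc))
    (fun y => by simpa [e] using neg_outwardStep_mem_A_oplus n₂ y)

theorem globally_admissible_iff_A_oplus_general
    (n₁ n₂ : ℕ)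
    (f : ℤ × ℤ → ℤ × ℤ)
    (hf : ∀ u ∈ box2 n₁ n₂, f u - u ∈ A_oplus) :
    (∃ π ∈ Omega2 A_oplus, ∀ u ∈ box2 n₁ n₂, π u = f u) ↔
      (Set.InjOn f (box2 n₁ n₂) ∧
        interior2 (box2 n₁ n₂) A_oplus ⊆ f '' (box2 n₁ n₂)) :=
  ⟨fun ⟨_, hπ, hπf⟩ => injOn_and_interior2_subset_image_of_mem_Omega2 hπ hπf,
    fun ⟨hinj, hint⟩ => exists_mem_Omega2_A_oplus_eqOn_box2 hf hinj hint⟩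

/-- for rectangular patterns and the restricting set `A_⊕`, local and
global admissibility coincide: a function `f` on the box `{0,…,n₁−1} × {0,…,n₂−1}`
with displacements in `A_⊕` extends to some `π ∈ Ω(A_⊕)` if and only if `f` is
injective on the box and `Int(U, A_⊕) ⊆ f(U)`. -/
theorem globally_admissible_iff_A_oplus
    (n₁ n₂ : ℕ) (h₁ : 1 ≤ n₁) (h₂ : 1 ≤ n₂)
    (f : ℤ × ℤ → ℤ × ℤ)
    (hf : ∀ u ∈ box2 n₁ n₂, f u - u ∈ A_oplus) :
    (∃ π ∈ Omega2 A_oplus, ∀ u ∈ box2 n₁ n₂, π u = f u) ↔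
      (Set.InjOn f (box2 n₁ n₂) ∧
        interior2 (box2 n₁ n₂) A_oplus ⊆ f '' (box2 n₁ n₂)) :=
  globally_admissible_iff_A_oplus_general n₁ n₂ f hf
end

section
/- Let A_L = {(0,0),(1,0),(0,1)} ⊆ ℤ². Let n₁, n₂ ≥ 1, let U = {0,…,n₁−1} × {0,…,n₂−1} ⊆ ℤ², and let f : U → ℤ² satisfy f(u) − u ∈ A_L for all u ∈ U. Then there exists π ∈ Ω(A_L) with π(u) = f(u) for all u ∈ U if and only if f is injective and Int(U, A_L) := {u ∈ U : u − a ∈ U for every a ∈ A_L} is contained in the image f(U). -/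
/-- The restricting set `A_L = {(0,0),(1,0),(0,1)} ⊆ ℤ²`. -/
def A_L : Set (ℤ × ℤ) := {(0, 0), (1, 0), (0, 1)}

/-!
Necessity holds for any `A` and `U`: `f` inherits injectivity from `π`, and an interior point
`u = π v` has `v = u - (π v - v) ∈ U`. For sufficiency, the points of `U` missed by `f` lie on
its bottom row or left column, and the points of `f(U)` outside `U` lie on the row just above or
the column just right of `U`. Outside `U` we shift by one step up (right) the vertical
(horizontal) ray below (left of) each missed point, filling it, and the ray starting at each
point of `f(U)` above (right of) `U`, making room for it; all other points stay fixed. These rays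
are pairwise disjoint, so the result is a bijection of `ℤ²` with displacements in `A_L`.
-/

open Set Function

lemma mem_A_L_iff {x : ℤ × ℤ} : x ∈ A_L ↔ x = (0, 0) ∨ x = (1, 0) ∨ x = (0, 1) := by
  simp [A_L]

section Necessity

variable {U A : Set (ℤ × ℤ)} {f π : ℤ × ℤ → ℤ × ℤ}

lemma injOn_of_mem_Omega2 (hπ : π ∈ Omega2 A) (hπf : EqOn π f U) : InjOn f U :=
  hπ.1.1.injOn.congr hπf

lemma interior2_subset_image_of_mem_Omega2 (hπ : π ∈ Omega2 A) (hπf : EqOn π f U) :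
    interior2 U A ⊆ f '' U := by
  rintro u ⟨-, hu⟩
  obtain ⟨v, rfl⟩ := hπ.1.2 u
  have hv : v ∈ U := by simpa using hu _ (hπ.2 v)
  exact ⟨v, hv, (hπf hv).symm⟩

end Necessity

lemma bijective_piecewise_of_bijOn_compl {α β : Type*} {s : Set α} [DecidablePred (· ∈ s)]
    {f g : α → β} (hf : InjOn f s) (hg : BijOn g sᶜ (f '' s)ᶜ) :
    Bijective (s.piecewise f g) := by
  refine ⟨(injective_piecewise_iff s).2 ⟨hf, hg.injOn, ?_⟩, ?_⟩
  · exact fun x hx y hy hxy => hg.mapsTo hy (hxy ▸ mem_image_of_mem f hx)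
  · rw [← range_eq_univ, range_piecewise]
    refine eq_univ_of_univ_subset ?_
    rw [← union_compl_self (f '' s)]
    exact union_subset_union_right _ hg.surjOn

section OuterShift

variable (n₁ n₂ : ℕ) (V : Set (ℤ × ℤ))

def shiftsUp : Set (ℤ × ℤ) :=
  {p | (0 ≤ p.1 ∧ p.1 < n₁) ∧ (p.2 < 0 ∧ (p.1, 0) ∉ V ∨ n₂ ≤ p.2 ∧ (p.1, (n₂ : ℤ)) ∈ V)}

-- The left rays start in row `1`: a missed corner `(0, 0)` is filled from below.
def shiftsRight : Set (ℤ × ℤ) :=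
  {p | (0 ≤ p.2 ∧ p.2 < n₂) ∧
    (p.1 < 0 ∧ 0 < p.2 ∧ (0, p.2) ∉ V ∨ n₁ ≤ p.1 ∧ ((n₁ : ℤ), p.2) ∈ V)}

-- `V` stands for `f(U)`; the map depends on `f` only through its image.
open Classical in
noncomputable def outerShift (p : ℤ × ℤ) : ℤ × ℤ :=
  if p ∈ shiftsUp n₁ n₂ V then p + (0, 1)
  else if p ∈ shiftsRight n₁ n₂ V then p + (1, 0) else p

variable {n₁ n₂ V}

lemma outerShift_of_mem_shiftsUp {p : ℤ × ℤ} (hp : p ∈ shiftsUp n₁ n₂ V) :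
    outerShift n₁ n₂ V p = p + (0, 1) :=
  if_pos hp

lemma outerShift_of_mem_shiftsRight {p : ℤ × ℤ} (hp : p ∈ shiftsRight n₁ n₂ V) :
    outerShift n₁ n₂ V p = p + (1, 0) := by
  have hp' : p ∉ shiftsUp n₁ n₂ V := by
    simp only [shiftsUp, shiftsRight, mem_ofPred_eq] at *
    omega
  rw [outerShift, if_neg hp', if_pos hp]

lemma outerShift_of_notMem {p : ℤ × ℤ} (hU : p ∉ shiftsUp n₁ n₂ V)
    (hR : p ∉ shiftsRight n₁ n₂ V) : outerShift n₁ n₂ V p = p := by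
  rw [outerShift, if_neg hU, if_neg hR]

lemma outerShift_cases (p : ℤ × ℤ) :
    p ∈ shiftsUp n₁ n₂ V ∧ outerShift n₁ n₂ V p = p + (0, 1) ∨
    p ∈ shiftsRight n₁ n₂ V ∧ outerShift n₁ n₂ V p = p + (1, 0) ∨
    (p ∉ shiftsUp n₁ n₂ V ∧ p ∉ shiftsRight n₁ n₂ V) ∧ outerShift n₁ n₂ V p = p := by
  unfold outerShift
  split_ifs <;> simp_all

lemma outerShift_sub_mem_A_L (p : ℤ × ℤ) : outerShift n₁ n₂ V p - p ∈ A_L := by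
  rcases outerShift_cases (V := V) (n₁ := n₁) (n₂ := n₂) p with ⟨-, h⟩ | ⟨-, h⟩ | ⟨-, h⟩ <;>
    simp [h, A_L, Prod.ext_iff]

lemma add_mem_shiftsUp (h₂ : 1 ≤ n₂) {p : ℤ × ℤ} (hp : p ∈ shiftsUp n₁ n₂ V)
    (hp' : p + (0, 1) ∉ box2 n₁ n₂) : p + (0, 1) ∈ shiftsUp n₁ n₂ V := by
  obtain ⟨x, y⟩ := p
  simp only [shiftsUp, box2, mem_ofPred_eq, Prod.mk_add_mk, add_zero] at *
  grind

lemma add_mem_shiftsRight (h₁ : 1 ≤ n₁) {p : ℤ × ℤ} (hp : p ∈ shiftsRight n₁ n₂ V)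
    (hp' : p + (1, 0) ∉ box2 n₁ n₂) : p + (1, 0) ∈ shiftsRight n₁ n₂ V := by
  obtain ⟨x, y⟩ := p
  simp only [shiftsRight, box2, mem_ofPred_eq, Prod.mk_add_mk, add_zero] at *
  grind

lemma shiftsUp_add_ne_shiftsRight_add {p q : ℤ × ℤ} (hp : p ∈ shiftsUp n₁ n₂ V)
    (hq : q ∈ shiftsRight n₁ n₂ V) : p + (0, 1) ≠ q + (1, 0) := by
  simp only [shiftsUp, shiftsRight, mem_ofPred_eq, ne_eq, Prod.ext_iff, Prod.fst_add,
    Prod.snd_add] at *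
  omega

lemma injOn_outerShift (h₁ : 1 ≤ n₁) (h₂ : 1 ≤ n₂) :
    InjOn (outerShift n₁ n₂ V) (box2 n₁ n₂)ᶜ := by
  intro p hp q hq h
  rcases outerShift_cases p with ⟨hpU, ep⟩ | ⟨hpR, ep⟩ | ⟨hpF, ep⟩ <;>
  rcases outerShift_cases q with ⟨hqU, eq⟩ | ⟨hqR, eq⟩ | ⟨hqF, eq⟩ <;>
  rw [ep, eq] at h
  · exact add_right_cancel h
  · exact absurd h (shiftsUp_add_ne_shiftsRight_add hpU hqR)
  · exact absurd (h ▸ add_mem_shiftsUp h₂ hpU (h ▸ hq)) hqF.1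
  · exact absurd h.symm (shiftsUp_add_ne_shiftsRight_add hqU hpR)
  · exact add_right_cancel h
  · exact absurd (h ▸ add_mem_shiftsRight h₁ hpR (h ▸ hq)) hqF.2
  · exact absurd (h ▸ add_mem_shiftsUp h₂ hqU (h ▸ hp)) hpF.1
  · exact absurd (h ▸ add_mem_shiftsRight h₁ hqR (h ▸ hp)) hpF.2
  · exact h

lemma mapsTo_outerShift (hV : V ⊆ box2 (n₁ + 1) (n₂ + 1) \ {((n₁ : ℤ), (n₂ : ℤ))}) :
    MapsTo (outerShift n₁ n₂ V) (box2 n₁ n₂)ᶜ Vᶜ := by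
  intro p hp hpV
  -- A point of `V` outside `U` lies on the row above or the column right of `U`, so it is the
  -- first point of a shifted ray and is not fixed.
  have hbox := hV hpV
  obtain ⟨x, y⟩ := p
  rcases outerShift_cases (x, y) with ⟨hpU, ep⟩ | ⟨hpR, ep⟩ | ⟨hpF, ep⟩ <;>
  rw [ep] at hpV hbox <;>
  simp only [shiftsUp, shiftsRight, box2, mem_ofPred_eq, mem_compl_iff, mem_sdiff,
    mem_singleton_iff, Prod.mk_add_mk, add_zero, Prod.mk.injEq, Nat.cast_add, Nat.cast_one] at * <;>
  grind

lemma surjOn_outerShift (hV : interior2 (box2 n₁ n₂) A_L ⊆ V) :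
    SurjOn (outerShift n₁ n₂ V) (box2 n₁ n₂)ᶜ Vᶜ := by
  intro q hqV
  have hedge : q ∈ box2 n₁ n₂ → q.1 = 0 ∨ q.2 = 0 := by
    intro hq
    by_contra! hne
    refine hqV (hV ⟨hq, fun a ha => ?_⟩)
    simp only [box2, mem_ofPred_eq] at hq ⊢
    rcases mem_A_L_iff.1 ha with rfl | rfl | rfl <;>
      simp only [Prod.fst_sub, Prod.snd_sub] <;> omega
  by_cases hUp : q - (0, 1) ∈ shiftsUp n₁ n₂ V ∧ q - (0, 1) ∉ box2 n₁ n₂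
  · exact ⟨_, hUp.2, by rw [outerShift_of_mem_shiftsUp hUp.1, sub_add_cancel]⟩
  by_cases hRight : q - (1, 0) ∈ shiftsRight n₁ n₂ V ∧ q - (1, 0) ∉ box2 n₁ n₂
  · exact ⟨_, hRight.2, by rw [outerShift_of_mem_shiftsRight hRight.1, sub_add_cancel]⟩
  obtain ⟨x, y⟩ := q
  simp only [shiftsUp, shiftsRight, box2, mem_ofPred_eq, mem_compl_iff, Prod.mk_sub_mk,
    sub_zero] at *
  refine ⟨(x, y), ?_, outerShift_of_notMem ?_ ?_⟩ <;>
  simp only [shiftsUp, shiftsRight, mem_ofPred_eq, mem_compl_iff] <;>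
  grind

lemma bijOn_outerShift (h₁ : 1 ≤ n₁) (h₂ : 1 ≤ n₂)
    (hV : V ⊆ box2 (n₁ + 1) (n₂ + 1) \ {((n₁ : ℤ), (n₂ : ℤ))})
    (hint : interior2 (box2 n₁ n₂) A_L ⊆ V) :
    BijOn (outerShift n₁ n₂ V) (box2 n₁ n₂)ᶜ Vᶜ :=
  ⟨mapsTo_outerShift hV, injOn_outerShift h₁ h₂, surjOn_outerShift hint⟩

end OuterShift

lemma image_subset_box2_sdiff_corner {n₁ n₂ : ℕ} {f : ℤ × ℤ → ℤ × ℤ}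
    (hf : ∀ u ∈ box2 n₁ n₂, f u - u ∈ A_L) :
    f '' box2 n₁ n₂ ⊆ box2 (n₁ + 1) (n₂ + 1) \ {((n₁ : ℤ), (n₂ : ℤ))} := by
  rintro _ ⟨u, hu, rfl⟩
  have hd := mem_A_L_iff.1 (hf u hu)
  simp only [Prod.ext_iff, Prod.fst_sub, Prod.snd_sub] at hd
  simp only [box2, mem_ofPred_eq, mem_sdiff, mem_singleton_iff, Prod.ext_iff,
    Nat.cast_add, Nat.cast_one] at hu ⊢
  omega

/-- for rectangular patterns and the restricting set `A_L`, local and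
global admissibility coincide: a function `f` on the box `{0,…,n₁−1} × {0,…,n₂−1}`
with displacements in `A_L` extends to some `π ∈ Ω(A_L)` if and only if `f` is
injective on the box and `Int(U, A_L) ⊆ f(U)`. -/
theorem globally_admissible_iff_A_L
    (n₁ n₂ : ℕ) (h₁ : 1 ≤ n₁) (h₂ : 1 ≤ n₂)
    (f : ℤ × ℤ → ℤ × ℤ)
    (hf : ∀ u ∈ box2 n₁ n₂, f u - u ∈ A_L) :
    (∃ π ∈ Omega2 A_L, ∀ u ∈ box2 n₁ n₂, π u = f u) ↔
      (Set.InjOn f (box2 n₁ n₂) ∧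
        interior2 (box2 n₁ n₂) A_L ⊆ f '' (box2 n₁ n₂)) := by
  constructor
  · rintro ⟨π, hπ, hπf⟩
    exact ⟨injOn_of_mem_Omega2 hπ hπf, interior2_subset_image_of_mem_Omega2 hπ hπf⟩
  · rintro ⟨hinj, hint⟩
    classical
    let π := (box2 n₁ n₂).piecewise f (outerShift n₁ n₂ (f '' box2 n₁ n₂))
    have hbij : Bijective π := bijective_piecewise_of_bijOn_compl hinj
      (bijOn_outerShift h₁ h₂ (image_subset_box2_sdiff_corner hf) hint)
    have hdisp : ∀ p, π p - p ∈ A_L := by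
      intro p
      by_cases hp : p ∈ box2 n₁ n₂
      · simpa [π, hp] using hf p hp
      · simpa [π, hp] using outerShift_sub_mem_A_L p
    exact ⟨π, ⟨hbij, hdisp⟩, fun u hu => piecewise_eq_of_mem _ _ _ hu⟩
end

section
/- Let d ≥ 1 and let A ⊆ ℤ^d be a finite nonempty set. Let X = A^{ℤ^d} be the compact topological space of all functions ω : ℤ^d → A with the product topology (A carrying the discrete topology), and for m ∈ ℤ^d let σ_m : X → X be the shift (σ_m ω)(n) = ω(n + m). Let μ be a Borel probability measure on X that is invariant under σ_m for every m ∈ ℤ^d. If for μ-almost every ω ∈ X the map n ↦ n + ω(n) from ℤ^d to ℤ^d is injective, then for μ-almost every ω ∈ X the map n ↦ n + ω(n) is a bijection of ℤ^d. -/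
/-!
Fix `m`. Each event `{ω | ω (m - a) = a}`, `a ∈ A`, puts `m` in the range of `n ↦ n + ω n`. By
shift invariance it has the same probability as `{ω | ω 0 = a}`, so these probabilities add up
to `1`; injectivity makes the events almost surely disjoint, hence their union has full measure.
-/

open MeasureTheory

open Function

section

variable {ι β : Type*} [MeasurableSpace β] [MeasurableSingletonClass β]

lemma measurableSet_eval_eq (i : ι) (b : β) : MeasurableSet {ω : ι → β | ω i = b} :=
  (measurableSet_singleton b).preimage (measurable_pi_apply i)

lemma tsum_measure_eval_eq [Countable β] (μ : Measure (ι → β)) (i : ι) :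
    ∑' b, μ {ω | ω i = b} = μ Set.univ := by
  rw [← measure_iUnion (fun a b hab ↦ Set.disjoint_left.2 fun ω ha hb ↦ hab (ha.symm.trans hb))
    (measurableSet_eval_eq i), Set.iUnion_eq_univ_iff.2 fun ω ↦ ⟨ω i, rfl⟩]

end

variable {G : Type*} [AddGroup G] [MeasurableSpace G] [MeasurableSingletonClass G]
  {A : Set G} {μ : Measure (G → A)}

lemma measure_eval_eq_of_shift_invariant
    (hinv : ∀ m : G, MeasurePreserving (fun ω : G → A ↦ fun n ↦ ω (n + m)) μ μ) (m : G) (a : A) :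
    μ {ω | ω m = a} = μ {ω | ω 0 = a} := by
  simpa using (hinv m).measure_preimage (measurableSet_eval_eq 0 a).nullMeasurableSet

lemma ae_exists_add_eq_of_ae_injective [Countable G] [IsProbabilityMeasure μ]
    (hinv : ∀ m : G, MeasurePreserving (fun ω : G → A ↦ fun n ↦ ω (n + m)) μ μ)
    (hinj : ∀ᵐ ω ∂μ, Injective fun n ↦ n + (ω n : G)) (m : G) :
    ∀ᵐ ω ∂μ, ∃ n, n + (ω n : G) = m := by
  set E : A → Set (G → A) := fun a ↦ {ω | ω (m - a) = a}
  have hE : ∀ a, MeasurableSet (E a) := fun a ↦ measurableSet_eval_eq (m - a) a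
  have hdisj : Pairwise (AEDisjoint μ on E) := by
    refine fun a b hab ↦ measure_mono_null ?_ (ae_iff.1 hinj)
    rintro ω ⟨ha : ω (m - a) = a, hb : ω (m - b) = b⟩ hω
    exact hab <| Subtype.ext <| sub_right_injective <| @hω (m - a) (m - b) <| by
      simp only [ha, hb, sub_add_cancel]
  have hcover : ∀ᵐ ω ∂μ, ω ∈ ⋃ a, E a := by
    rw [ae_mem_iff_measure_eq (MeasurableSet.iUnion hE).nullMeasurableSet,
      measure_iUnion₀ hdisj fun a ↦ (hE a).nullMeasurableSet]
    simp only [E, measure_eval_eq_of_shift_invariant hinv, tsum_measure_eval_eq]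
  filter_upwards [hcover] with ω hω
  obtain ⟨a, ha⟩ := Set.mem_iUnion.1 hω
  exact ⟨m - a, by rw [ha, sub_add_cancel]⟩

theorem ae_injective_implies_ae_bijective_general
    (d : ℕ) (A : Set (Zd d))
    (μ : Measure (Zd d → ↥A)) [IsProbabilityMeasure μ]
    (hinv : ∀ m : Zd d,
      MeasurePreserving (fun ω : Zd d → ↥A => fun n : Zd d => ω (n + m)) μ μ)
    (hinj : ∀ᵐ ω ∂μ, Function.Injective (fun n : Zd d => n + (ω n : Zd d))) :
    ∀ᵐ ω ∂μ, Function.Bijective (fun n : Zd d => n + (ω n : Zd d)) := by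
  filter_upwards [hinj, ae_all_iff.2 (ae_exists_add_eq_of_ae_injective hinv hinj)]
    with ω hω_inj hω_surj
  exact ⟨hω_inj, hω_surj⟩

/-- if `μ` is a shift-invariant probability measure on `X = A^{ℤ^d}`
(for a finite nonempty `A ⊆ ℤ^d`) such that `μ`-almost every `ω` encodes an injective
restricted function `n ↦ n + ω(n)`, then `μ`-almost every `ω` encodes a bijection
(i.e. a restricted permutation) of `ℤ^d`. -/
theorem ae_injective_implies_ae_bijective
    (d : ℕ) (hd : 1 ≤ d) (A : Set (Zd d)) (hA : A.Finite) (hne : A.Nonempty)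
    (μ : Measure (Zd d → ↥A)) [IsProbabilityMeasure μ]
    (hinv : ∀ m : Zd d,
      MeasurePreserving (fun ω : Zd d → ↥A => fun n : Zd d => ω (n + m)) μ μ)
    (hinj : ∀ᵐ ω ∂μ, Function.Injective (fun n : Zd d => n + (ω n : Zd d))) :
    ∀ᵐ ω ∂μ, Function.Bijective (fun n : Zd d => n + (ω n : Zd d)) :=
  ae_injective_implies_ae_bijective_general d A μ hinv hinj
end

section
/- Let d ≥ 1 and let A ⊆ ℤ^d be a finite nonempty set. Let X = A^{ℤ^d} be the compact topological space of all functions ω : ℤ^d → A with the product topology (A carrying the discrete topology), and for m ∈ ℤ^d let σ_m : X → X be the shift (σ_m ω)(n) = ω(n + m). Let μ be a Borel probability measure on X that is invariant under σ_m for every m ∈ ℤ^d. If for μ-almost every ω ∈ X the map n ↦ n + ω(n) from ℤ^d to ℤ^d is surjective, then for μ-almost every ω ∈ X the map n ↦ n + ω(n) is a bijection of ℤ^d. -/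
/-!
Count the preimages of a site `m` under `f_ω : n ↦ n + ω n` through the displacements
`a ∈ A` with `ω (m - a) = a`. By shift invariance the event `ω (m - a) = a` has the same
measure as `ω 0 = a`, and these events partition the space, so the expected number of
preimages of `m` is `1`. Almost sure surjectivity makes that number at least `1`, hence it
is `1` almost surely; ranging over the countably many sites `m` gives injectivity.
-/

open MeasureTheory

open scoped ENNReal Finset

section Coordinates

variable {α G : Type*} [MeasurableSpace G] [MeasurableSingletonClass G] {A : Set G}

theorem measurableSet_coe_apply_eq (x : α) (a : G) :
    MeasurableSet {ω : α → A | (ω x : G) = a} :=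
  (measurable_subtype_coe.comp (measurable_pi_apply x)) (measurableSet_singleton a)

theorem sum_measure_coe_apply_eq {μ : Measure (α → A)} {F : Finset G} (hF : A ⊆ F) (x : α) :
    ∑ a ∈ F, μ {ω : α → A | (ω x : G) = a} = μ Set.univ := by
  have hdisj : (F : Set G).PairwiseDisjoint fun a => {ω : α → A | (ω x : G) = a} :=
    fun a _ b _ hab => Set.disjoint_left.2 fun ω ha hb => hab (ha.symm.trans hb)
  rw [← measure_biUnion_finset hdisj fun a _ => measurableSet_coe_apply_eq x a]
  congr 1
  exact Set.eq_univ_of_forall fun ω => Set.mem_biUnion (hF (ω x).2) rfl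

end Coordinates

section RestrictedFunction

variable {G : Type*} [AddCommGroup G] {A : Set G}

def restrictedMap (ω : G → A) (n : G) : G := n + ω n

def shift (m : G) (ω : G → A) : G → A := fun n => ω (n + m)

theorem restrictedMap_eq_iff {ω : G → A} {n m : G} :
    restrictedMap ω n = m ↔ n = m - ω n := by
  rw [eq_sub_iff_add_eq]; rfl

section FiberCount

variable [DecidableEq G]

def fiberCount (F : Finset G) (ω : G → A) (m : G) : ℕ :=
  #{a ∈ F | (ω (m - a) : G) = a}

theorem mem_filter_of_restrictedMap_eq {F : Finset G} (hF : A ⊆ F) {ω : G → A} {n m : G}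
    (hn : restrictedMap ω n = m) : (ω n : G) ∈ ({a ∈ F | (ω (m - a) : G) = a} : Finset G) := by
  refine Finset.mem_filter.2 ⟨hF (ω n).2, ?_⟩
  rw [← restrictedMap_eq_iff.1 hn]

theorem fiberCount_pos {F : Finset G} (hF : A ⊆ F) {ω : G → A} {m : G}
    (hm : m ∈ Set.range (restrictedMap ω)) : 0 < fiberCount F ω m := by
  obtain ⟨n, hn⟩ := hm
  exact Finset.card_pos.2 ⟨_, mem_filter_of_restrictedMap_eq hF hn⟩

theorem subsingleton_preimage_of_fiberCount_le_one {F : Finset G} (hF : A ⊆ F) {ω : G → A}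
    {m : G} (hm : fiberCount F ω m ≤ 1) : (restrictedMap ω ⁻¹' {m}).Subsingleton := by
  intro n₁ h₁ n₂ h₂
  rw [restrictedMap_eq_iff.1 h₁, restrictedMap_eq_iff.1 h₂, Finset.card_le_one.1 hm _
    (mem_filter_of_restrictedMap_eq hF h₁) _ (mem_filter_of_restrictedMap_eq hF h₂)]

theorem natCast_fiberCount (F : Finset G) (ω : G → A) (m : G) :
    (fiberCount F ω m : ℝ≥0∞) = ∑ a ∈ F, {ω : G → A | (ω (m - a) : G) = a}.indicator 1 ω := by
  simp only [fiberCount, Finset.natCast_card_filter, Set.indicator_apply, Set.mem_ofPred_eq,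
    Pi.one_apply]

end FiberCount

variable [MeasurableSpace G] [MeasurableSingletonClass G] {μ : Measure (G → A)}

theorem measure_coe_apply_eq_of_shift (hinv : ∀ m, MeasurePreserving (shift m) μ μ) (x a : G) :
    μ {ω : G → A | (ω x : G) = a} = μ {ω | (ω 0 : G) = a} := by
  simpa [shift] using (hinv x).measure_preimage (measurableSet_coe_apply_eq 0 a).nullMeasurableSet

theorem measurable_natCast_fiberCount [DecidableEq G] (F : Finset G) (m : G) :
    Measurable fun ω : G → A => (fiberCount F ω m : ℝ≥0∞) := by
  simp_rw [natCast_fiberCount]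
  exact Finset.measurable_sum _ fun a _ =>
    measurable_one.indicator (measurableSet_coe_apply_eq (m - a) a)

theorem lintegral_fiberCount [DecidableEq G] (hinv : ∀ m, MeasurePreserving (shift m) μ μ)
    {F : Finset G} (hF : A ⊆ F) (m : G) :
    ∫⁻ ω, (fiberCount F ω m : ℝ≥0∞) ∂μ = μ Set.univ := by
  simp_rw [natCast_fiberCount]
  rw [lintegral_finsetSum _ fun a _ =>
    measurable_one.indicator (measurableSet_coe_apply_eq (m - a) a)]
  simp_rw [lintegral_indicator_one (measurableSet_coe_apply_eq _ _),
    measure_coe_apply_eq_of_shift hinv]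
  exact sum_measure_coe_apply_eq hF 0

theorem ae_subsingleton_preimage [IsFiniteMeasure μ] (hA : A.Finite)
    (hinv : ∀ m, MeasurePreserving (shift m) μ μ)
    (hsurj : ∀ᵐ ω ∂μ, Function.Surjective (restrictedMap ω)) (m : G) :
    ∀ᵐ ω ∂μ, (restrictedMap ω ⁻¹' {m}).Subsingleton := by
  classical
  have hF : A ⊆ hA.toFinset := by simp
  have hpos : ∀ᵐ ω ∂μ, (1 : ℝ≥0∞) ≤ fiberCount hA.toFinset ω m :=
    hsurj.mono fun ω hω => by exact_mod_cast fiberCount_pos hF (hω m)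
  have hone : (fun _ => (1 : ℝ≥0∞)) =ᵐ[μ] fun ω => (fiberCount hA.toFinset ω m : ℝ≥0∞) :=
    ae_eq_of_ae_le_of_lintegral_le hpos (by simp)
      (measurable_natCast_fiberCount _ m).aemeasurable (by simp [lintegral_fiberCount hinv hF])
  filter_upwards [hone] with ω hω
  exact subsingleton_preimage_of_fiberCount_le_one hF (by exact_mod_cast hω.symm.le)

theorem ae_bijective_restrictedMap [Countable G] [IsFiniteMeasure μ] (hA : A.Finite)
    (hinv : ∀ m, MeasurePreserving (shift m) μ μ)
    (hsurj : ∀ᵐ ω ∂μ, Function.Surjective (restrictedMap ω)) :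
    ∀ᵐ ω ∂μ, Function.Bijective (restrictedMap ω) := by
  filter_upwards [hsurj, ae_all_iff.2 (ae_subsingleton_preimage hA hinv hsurj)] with ω hs hfib
  exact ⟨fun n₁ n₂ h => hfib _ h rfl, hs⟩

end RestrictedFunction

theorem ae_surjective_implies_ae_bijective_general
    (d : ℕ) (A : Set (Zd d)) (hA : A.Finite)
    (μ : Measure (Zd d → ↥A)) [IsProbabilityMeasure μ]
    (hinv : ∀ m : Zd d,
      MeasurePreserving (fun ω : Zd d → ↥A => fun n : Zd d => ω (n + m)) μ μ)
    (hsurj : ∀ᵐ ω ∂μ, Function.Surjective (fun n : Zd d => n + (ω n : Zd d))) :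
    ∀ᵐ ω ∂μ, Function.Bijective (fun n : Zd d => n + (ω n : Zd d)) :=
  ae_bijective_restrictedMap hA hinv hsurj

/-- if `μ` is a shift-invariant probability measure on `X = A^{ℤ^d}`
(for a finite nonempty `A ⊆ ℤ^d`) such that `μ`-almost every `ω` encodes a surjective
restricted function `n ↦ n + ω(n)`, then `μ`-almost every `ω` encodes a bijection
(i.e. a restricted permutation) of `ℤ^d`. -/
theorem ae_surjective_implies_ae_bijective
    (d : ℕ) (hd : 1 ≤ d) (A : Set (Zd d)) (hA : A.Finite) (hne : A.Nonempty)
    (μ : Measure (Zd d → ↥A)) [IsProbabilityMeasure μ]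
    (hinv : ∀ m : Zd d,
      MeasurePreserving (fun ω : Zd d → ↥A => fun n : Zd d => ω (n + m)) μ μ)
    (hsurj : ∀ᵐ ω ∂μ, Function.Surjective (fun n : Zd d => n + (ω n : Zd d))) :
    ∀ᵐ ω ∂μ, Function.Bijective (fun n : Zd d => n + (ω n : Zd d)) :=
  ae_surjective_implies_ae_bijective_general d A hA μ hinv hsurj
end
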